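/- arXiv:2509.25954 — 2 statements merged into one kernel-verified Lean document; each statement's English description precedes it below -/
import Mathlib

section
/- Let $l_1, l_2, l_3$ be nonnegative integers with pairwise distinct squares, and for $a \in \mathbb{C}$ define the Laurent polynomial $P_a(\zeta) = (\zeta^{l_1} + \zeta^{-l_1}) + a(\zeta^{l_2} + \zeta^{-l_2}) - (a+1)(\zeta^{l_3} + \zeta^{-l_3})$. Then $P_a$ has a zero of order at least $4$ at $\zeta = 1$ if and only if $a = \frac{l_1^2 - l_3^2}{l_3^2 - l_2^2}$; moreover, for this value of $a$ the fourth derivative of $P_a$ at $\zeta = 1$ is nonzero, so the zero has order exactly $4$. -/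
/-!
The `k`-th derivative of `ζ ^ m + ζ ^ (-m)` at `1` is `∏ (m - i) + ∏ (-m - i)`, an even polynomial
in `m`; for `k = 0, …, 4` it is `2, 0, 2m², -6m², 2m⁴ + 22m²`. The coefficients `1, a, -(a + 1)`
sum to zero, so the constants cancel and the derivatives of orders `0, …, 3` all vanish iff
`l₁² + a l₂² - (a + 1) l₃² = 0`. Under that condition the fourth derivative equals
`2 (l₁² - l₂²)(l₁² - l₃²)`.
-/

open Finset

section
variable {𝕜 : Type*} [NontriviallyNormedField 𝕜]

theorem contDiffAt_zpow {x : 𝕜} (hx : x ≠ 0) (m : ℤ) {n : WithTop ℕ∞} :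
    ContDiffAt 𝕜 n (fun y => y ^ m) x := by
  rcases m with m | m
  · simp only [Int.ofNat_eq_natCast, zpow_natCast]
    fun_prop
  · simp only [zpow_negSucc]
    exact (contDiff_id.pow (m + 1)).contDiffAt.inv (pow_ne_zero _ hx)

theorem iteratedDeriv_zpow_one (m : ℤ) (k : ℕ) :
    iteratedDeriv k (fun x : 𝕜 => x ^ m) 1 = ∏ i ∈ range k, ((m : 𝕜) - i) := by
  rw [iteratedDeriv_eq_iterate, iter_deriv_zpow, one_zpow, mul_one]

theorem iteratedDeriv_zpow_add_zpow_neg_one (m : ℤ) (k : ℕ) :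
    iteratedDeriv k (fun x : 𝕜 => x ^ m + x ^ (-m)) 1 =
      ∏ i ∈ range k, ((m : 𝕜) - i) + ∏ i ∈ range k, (-(m : 𝕜) - i) := by
  rw [iteratedDeriv_fun_add (contDiffAt_zpow one_ne_zero m) (contDiffAt_zpow one_ne_zero (-m)),
    iteratedDeriv_zpow_one, iteratedDeriv_zpow_one, Int.cast_neg]

theorem iteratedDeriv_zpow_add_zpow_neg_one_zero (m : ℤ) :
    iteratedDeriv 0 (fun x : 𝕜 => x ^ m + x ^ (-m)) 1 = 2 := by
  rw [iteratedDeriv_zero, one_zpow, one_zpow, one_add_one_eq_two]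

theorem iteratedDeriv_zpow_add_zpow_neg_one_one (m : ℤ) :
    iteratedDeriv 1 (fun x : 𝕜 => x ^ m + x ^ (-m)) 1 = 0 := by
  rw [iteratedDeriv_zpow_add_zpow_neg_one]
  simp

theorem iteratedDeriv_zpow_add_zpow_neg_one_two (m : ℤ) :
    iteratedDeriv 2 (fun x : 𝕜 => x ^ m + x ^ (-m)) 1 = 2 * (m : 𝕜) ^ 2 := by
  rw [iteratedDeriv_zpow_add_zpow_neg_one]
  simp only [prod_range_succ, prod_range_zero]
  push_cast
  ring

theorem iteratedDeriv_zpow_add_zpow_neg_one_three (m : ℤ) :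
    iteratedDeriv 3 (fun x : 𝕜 => x ^ m + x ^ (-m)) 1 = -6 * (m : 𝕜) ^ 2 := by
  rw [iteratedDeriv_zpow_add_zpow_neg_one]
  simp only [prod_range_succ, prod_range_zero]
  push_cast
  ring

theorem iteratedDeriv_zpow_add_zpow_neg_one_four (m : ℤ) :
    iteratedDeriv 4 (fun x : 𝕜 => x ^ m + x ^ (-m)) 1 = 2 * (m : 𝕜) ^ 4 + 22 * (m : 𝕜) ^ 2 := by
  rw [iteratedDeriv_zpow_add_zpow_neg_one]
  simp only [prod_range_succ, prod_range_zero]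
  push_cast
  ring

theorem iteratedDeriv_zpow_add_zpow_neg_combination_one (m₁ m₂ m₃ : ℤ) (a : 𝕜) (k : ℕ) :
    iteratedDeriv k (fun x : 𝕜 => (x ^ m₁ + x ^ (-m₁)) + a * (x ^ m₂ + x ^ (-m₂))
        - (a + 1) * (x ^ m₃ + x ^ (-m₃))) 1 =
      iteratedDeriv k (fun x : 𝕜 => x ^ m₁ + x ^ (-m₁)) 1
        + a * iteratedDeriv k (fun x : 𝕜 => x ^ m₂ + x ^ (-m₂)) 1
        - (a + 1) * iteratedDeriv k (fun x : 𝕜 => x ^ m₃ + x ^ (-m₃)) 1 := by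
  have h : ∀ m : ℤ, ContDiffAt 𝕜 k (fun x : 𝕜 => x ^ m + x ^ (-m)) 1 := fun m =>
    (contDiffAt_zpow one_ne_zero m).add (contDiffAt_zpow one_ne_zero (-m))
  rw [iteratedDeriv_fun_sub ((h m₁).add (contDiffAt_const.mul (h m₂)))
      (contDiffAt_const.mul (h m₃)),
    iteratedDeriv_fun_add (h m₁) (contDiffAt_const.mul (h m₂)), iteratedDeriv_const_mul_field,
    iteratedDeriv_const_mul_field]

end

section

variable {K : Type*} [Field K] {u₁ u₂ u₃ a : K}

theorem add_mul_sub_mul_eq_zero_iff (h : u₂ ≠ u₃) :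
    u₁ + a * u₂ - (a + 1) * u₃ = 0 ↔ a = (u₁ - u₃) / (u₃ - u₂) := by
  rw [eq_div_iff (sub_ne_zero.2 h.symm)]
  constructor <;> intro h' <;> linear_combination -h'

end

theorem stmt_4 (l1 l2 l3 : ℕ)
    (h12 : l1 ^ 2 ≠ l2 ^ 2) (h13 : l1 ^ 2 ≠ l3 ^ 2) (h23 : l2 ^ 2 ≠ l3 ^ 2) :
    let P : ℂ → ℂ → ℂ := fun a ζ =>
      (ζ ^ (l1 : ℤ) + ζ ^ (-(l1 : ℤ))) + a * (ζ ^ (l2 : ℤ) + ζ ^ (-(l2 : ℤ)))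
        - (a + 1) * (ζ ^ (l3 : ℤ) + ζ ^ (-(l3 : ℤ)))
    (∀ a : ℂ, (∀ i < 4, iteratedDeriv i (P a) 1 = 0) ↔
        a = ((l1 : ℂ) ^ 2 - (l3 : ℂ) ^ 2) / ((l3 : ℂ) ^ 2 - (l2 : ℂ) ^ 2)) ∧
    iteratedDeriv 4 (P (((l1 : ℂ) ^ 2 - (l3 : ℂ) ^ 2) / ((l3 : ℂ) ^ 2 - (l2 : ℂ) ^ 2))) 1 ≠ 0 := by
  intro P
  have hu₁₂ : (l1 : ℂ) ^ 2 ≠ (l2 : ℂ) ^ 2 := by exact_mod_cast h12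
  have hu₁₃ : (l1 : ℂ) ^ 2 ≠ (l3 : ℂ) ^ 2 := by exact_mod_cast h13
  have hu₂₃ : (l2 : ℂ) ^ 2 ≠ (l3 : ℂ) ^ 2 := by exact_mod_cast h23
  have hP : ∀ a k, iteratedDeriv k (P a) 1 =
      iteratedDeriv k (fun x : ℂ => x ^ (l1 : ℤ) + x ^ (-(l1 : ℤ))) 1
        + a * iteratedDeriv k (fun x : ℂ => x ^ (l2 : ℤ) + x ^ (-(l2 : ℤ))) 1
        - (a + 1) * iteratedDeriv k (fun x : ℂ => x ^ (l3 : ℤ) + x ^ (-(l3 : ℤ))) 1 :=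
    fun a k => iteratedDeriv_zpow_add_zpow_neg_combination_one _ _ _ a k
  refine ⟨fun a => ?_, ?_⟩
  · rw [← add_mul_sub_mul_eq_zero_iff hu₂₃]
    constructor
    · intro h
      have h2 := h 2 (by norm_num)
      rw [hP, iteratedDeriv_zpow_add_zpow_neg_one_two, iteratedDeriv_zpow_add_zpow_neg_one_two,
        iteratedDeriv_zpow_add_zpow_neg_one_two] at h2
      push_cast at h2
      linear_combination h2 / 2
    · intro h i hi
      rw [hP]
      interval_cases i
      · simp only [iteratedDeriv_zpow_add_zpow_neg_one_zero]
        ring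
      · simp only [iteratedDeriv_zpow_add_zpow_neg_one_one]
        ring
      · simp only [iteratedDeriv_zpow_add_zpow_neg_one_two, Int.cast_natCast]
        linear_combination 2 * h
      · simp only [iteratedDeriv_zpow_add_zpow_neg_one_three, Int.cast_natCast]
        linear_combination -6 * h
  · have h := (add_mul_sub_mul_eq_zero_iff (u₁ := (l1 : ℂ) ^ 2) hu₂₃).2 rfl
    have h4 : iteratedDeriv 4 (P (((l1 : ℂ) ^ 2 - (l3 : ℂ) ^ 2) / ((l3 : ℂ) ^ 2 - (l2 : ℂ) ^ 2))) 1
        = 2 * (((l1 : ℂ) ^ 2 - (l2 : ℂ) ^ 2) * ((l1 : ℂ) ^ 2 - (l3 : ℂ) ^ 2)) := by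
      simp only [hP, iteratedDeriv_zpow_add_zpow_neg_one_four, Int.cast_natCast]
      linear_combination (2 * ((l2 : ℂ) ^ 2 + (l3 : ℂ) ^ 2) + 22) * h
    rw [h4]
    exact mul_ne_zero two_ne_zero (mul_ne_zero (sub_ne_zero.2 hu₁₂) (sub_ne_zero.2 hu₁₃))
end

section
/- Define $S(a,b,c) = 1196694415125 a^3 - 819233068500 a^2 b - 18637542000 a b^2 - 30184000 b^3 - 20559305385 a^2 c + 1081838520 a b c + 4504080 b^2 c + 16833519 a c^2 - 137844 b c^2 - 595 c^3$, a homogeneous cubic polynomial over $\mathbb{Q}$. Then the projective plane curve $S = 0$ is smooth; that is, there is no $(a,b,c) \in \mathbb{C}^3 \setminus \{(0,0,0)\}$ at which $S$ and all three partial derivatives $\partial S/\partial a$, $\partial S/\partial b$, $\partial S/\partial c$ vanish simultaneously. -/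
/-!
By Euler's identity `3 S = a ∂S/∂a + b ∂S/∂b + c ∂S/∂c`, a singular point of `S = 0` is just
a common zero of the three partial derivatives, which are ternary quadrics. These have only
the trivial common zero: `a⁴`, `b⁴` and `c⁴` each lie in the ideal they generate over `ℚ`,
with quadratic multipliers found by solving the resulting linear system over `ℚ`.
-/

noncomputable def ScubicC (a b c : ℂ) : ℂ :=
  1196694415125 * a ^ 3 - 819233068500 * a ^ 2 * b - 18637542000 * a * b ^ 2
    - 30184000 * b ^ 3 - 20559305385 * a ^ 2 * c + 1081838520 * a * b * c
    + 4504080 * b ^ 2 * c + 16833519 * a * c ^ 2 - 137844 * b * c ^ 2 - 595 * c ^ 3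

def scubicPartialA {R : Type*} [CommRing R] (a b c : R) : R :=
  3590083245375 * a ^ 2 - 1638466137000 * a * b - 18637542000 * b ^ 2
    - 41118610770 * a * c + 1081838520 * b * c + 16833519 * c ^ 2

def scubicPartialB {R : Type*} [CommRing R] (a b c : R) : R :=
  -819233068500 * a ^ 2 - 37275084000 * a * b - 90552000 * b ^ 2
    + 1081838520 * a * c + 9008160 * b * c - 137844 * c ^ 2

def scubicPartialC {R : Type*} [CommRing R] (a b c : R) : R :=
  -20559305385 * a ^ 2 + 1081838520 * a * b + 4504080 * b ^ 2
    + 33667038 * a * c - 275688 * b * c - 1785 * c ^ 2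

theorem deriv_scubicC_a (a b c : ℂ) :
    deriv (fun x => ScubicC x b c) a = scubicPartialA a b c := by
  simp (disch := fun_prop) only [ScubicC, scubicPartialA, deriv_fun_add, deriv_fun_sub,
    deriv_fun_mul, deriv_const, deriv_pow_field, deriv_const_mul_id]
  ring

theorem deriv_scubicC_b (a b c : ℂ) :
    deriv (fun x => ScubicC a x c) b = scubicPartialB a b c := by
  simp (disch := fun_prop) only [ScubicC, scubicPartialB, deriv_fun_add, deriv_fun_sub,
    deriv_fun_mul, deriv_const, deriv_pow_field, deriv_const_mul_id]
  ring

theorem deriv_scubicC_c (a b c : ℂ) :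
    deriv (fun x => ScubicC a b x) c = scubicPartialC a b c := by
  simp (disch := fun_prop) only [ScubicC, scubicPartialC, deriv_fun_add, deriv_fun_sub,
    deriv_fun_mul, deriv_const, deriv_pow_field, deriv_const_mul_id]
  ring

theorem eq_zero_of_scubicPartial_eq_zero {K : Type*} [Field K] [CharZero K] {a b c : K}
    (ha : scubicPartialA a b c = 0) (hb : scubicPartialB a b c = 0)
    (hc : scubicPartialC a b c = 0) : a = 0 ∧ b = 0 ∧ c = 0 := by
  simp only [scubicPartialA, scubicPartialB, scubicPartialC] at ha hb hc
  refine ⟨eq_zero_of_pow_eq_zero (n := 4) ?_, eq_zero_of_pow_eq_zero (n := 4) ?_,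
    eq_zero_of_pow_eq_zero (n := 4) ?_⟩
  · linear_combination
      (89598737483077517974671033463/1590737461400783983755999918346446394043136000000 * c ^ 2
          - 100420485673389619002230990083/34087231315731085366199998250280994158067200000 * b * c
          + 1159697717725487230791406813/44269131578871539436623374351014278127360000 * b ^ 2
          - 8800177404409902647047335880909/18714558369420988044188234333487604635801600000 * a * c
          + 6712483535899484977714785737/552377755886097640029168663916399192320000 * a * b
          + 1/3590083245375 * a ^ 2) * ha
      + (160114192792386701147846961473/25192674728066714674868776987387160086656000000 * c ^ 2
          + 286661876734203842935005027137/719790706516191847853393628211061716761600000 * b * c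
          - 6413130023225374133100849553/934793125345703698510900815858521710080000 * b ^ 2
          - 610025557648461749455021392407/47567868041375060388278010288457963852800000 * a * c
          - 62250542283698801271367123297/123552904003571585424098728021968737280000 * a * b) * hb
      + (16792060381565111601759398777/415879074876021956537516318521946769684480000 * c ^ 2
          + 388327262429603586871780441/270051347322092179569815791248017382912000 * b * c
          - 211337504371619630090603/7157470111902787690692175755314534400 * b ^ 2
          - 703909483662419085830123801/5491240177936514907737721245420832768000 * a * c) * hc
  · linear_combination
      (442899373213826215310898899/5666334767082041200798928934447792000000 * c ^ 2
          - 21478156180970863141970737/12142145929461516858854847716673840000 * b * c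
          - 77658918030619486777571/1962208456603347908670789870180000 * b ^ 2
          - 16672726006753586232430977577/66662761965671072950575634522915200000 * a * c
          - 1448051116314803196815316389/36627891189929160961854744243360000 * a * b) * ha
      + (6469832135203116634743862651/583299167199621888317536802075508000000 * c ^ 2
          + 8903503724577731838643812653/6060251087788279359143239502083200000 * b * c
          + 259625835762142894216779413/4578486398741145120231843030420000 * b ^ 2
          + 13657934751754983265821293239/1440244857283017008191448894013600000 * a * c
          - 243731376013382716295647313/1406832583426634440235847515520000 * a * b) * hb
      + (-9649935044391596761041719/80803347837177058121909860027776000 * c ^ 2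
          - 24075214677328006594586719/2885833851327752075782495000992000 * b * c
          + 19388081784277857256051/16179826481990087888441887200 * b ^ 2
          - 252314901243729586013517953/598543317312422652754887852057600 * a * c) * hc
  · linear_combination
      (1709955643098252735785072189/26838219789674763498480811551768576 * c ^ 2
          - 1798231795652716379862535775/4443990939199392657215978536169472 * b * c
          + 52705289564044633517505875/24417532632963695918769112836096 * b ^ 2
          - 2276395819049314665429047068315/26838219789674763498480811551768576 * a * c
          - 99164874445619497510601375/43525013605995892903331751936 * a * b) * ha
      + (-16254864915273080803377051715/8539433569441970204062076402835456 * c ^ 2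
          + 43262932290109498377921590555/13419109894837381749240405775884288 * b * c
          + 277504785393417267257014625/87050027211991785806663503872 * b ^ 2
          + 373362125872970537644230405325/105425105795579879062494770405376 * a * c
          - 2384445354420836573805125/238820376438934940484673536 * a * b) * hb
      + (1678496473507219039051615482785/8946073263224921166160270517256192 * c ^ 2
          - 117175976176432605615915530875/29045692413067925864156722458624 * b * c
          + 1059430693457861243365065625/14508337868665297634443917312 * b ^ 2
          - 4696842669305614697946103453375/30121458798737108303569934401536 * a * c) * hc

theorem stmt_15 :
    ¬ ∃ a b c : ℂ, (a, b, c) ≠ (0, 0, 0) ∧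
      ScubicC a b c = 0 ∧
      deriv (fun x => ScubicC x b c) a = 0 ∧
      deriv (fun x => ScubicC a x c) b = 0 ∧
      deriv (fun x => ScubicC a b x) c = 0 := by
  rintro ⟨a, b, c, hne, -, hda, hdb, hdc⟩
  rw [deriv_scubicC_a] at hda
  rw [deriv_scubicC_b] at hdb
  rw [deriv_scubicC_c] at hdc
  obtain ⟨rfl, rfl, rfl⟩ := eq_zero_of_scubicPartial_eq_zero hda hdb hdc
  exact hne rfl
end
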